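/- Let S = P_S ∪ L_S be a resolving set for a biaffine plane of order q with |P_S| ≤ |L_S|, let u be the number of uncovered directions and c the number of unblocked classes. If |S| < 3(q−1) then u ≤ 2; if |S| < (8/3)(q−1) then u ≤ 1; if |S| < (8/3)(q−1) − 1 then c ≤ 4. -/

import Mathlib

open Set

/-- The bipartite point-line incidence graph of an incidence relation `I`. -/
def IncGraph {Pt Ln : Type*} (I : Pt → Ln → Prop) : SimpleGraph (Pt ⊕ Ln) where
  Adj x y := (∃ p l, x = Sum.inl p ∧ y = Sum.inr l ∧ I p l) ∨
             (∃ p l, x = Sum.inr l ∧ y = Sum.inl p ∧ I p l)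
  symm := by
    constructor
    rintro x y (⟨p, l, hx, hy, h⟩ | ⟨p, l, hx, hy, h⟩)
    · exact Or.inr ⟨p, l, hy, hx, h⟩
    · exact Or.inl ⟨p, l, hy, hx, h⟩
  loopless := by
    constructor
    rintro x (⟨p, l, hx, hy, h⟩ | ⟨p, l, hx, hy, h⟩) <;> subst hx <;> simp_all

/-- A set of vertices is a resolving set if every vertex is determined
by its distances to the elements of `S`. -/
def IsResolvingSet {V : Type*} (G : SimpleGraph V) (S : Set V) : Prop :=
  ∀ x y : V, (∀ s ∈ S, G.dist x s = G.dist y s) → x = y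

/-- A biaffine plane of order `q` (an affine plane with one parallel class of lines
removed), together with its partition into `q` parallel classes of lines (given by
`dir`, the direction) and `q` non-adjacency classes of points (given by `cls`):
`q²` points and `q²` lines, each point on `q` lines, each line with `q` points,
two points on at most one common line; two lines are in the same parallel class iff
they are equal or disjoint; two points are in the same non-adjacency class iff they
are equal or non-collinear; and for every non-incident point-line pair `(p, l)` there
is exactly one line through `p` missing `l` and exactly one point of `l` not
collinear with `p`. -/
def IsBiaffinePlane {Pt Ln : Type*} (q : ℕ) (I : Pt → Ln → Prop)
    (dir : Ln → Fin q) (cls : Pt → Fin q) : Prop :=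
  Nat.card Pt = q ^ 2 ∧ Nat.card Ln = q ^ 2 ∧
  (∀ l, {p | I p l}.ncard = q) ∧
  (∀ p, {l | I p l}.ncard = q) ∧
  (∀ p₁ p₂ : Pt, p₁ ≠ p₂ → {l | I p₁ l ∧ I p₂ l}.ncard ≤ 1) ∧
  (∀ l₁ l₂ : Ln, dir l₁ = dir l₂ ↔ (l₁ = l₂ ∨ ∀ p, ¬ (I p l₁ ∧ I p l₂))) ∧
  (∀ p₁ p₂ : Pt, cls p₁ = cls p₂ ↔ (p₁ = p₂ ∨ ∀ l, ¬ (I p₁ l ∧ I p₂ l))) ∧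
  (∀ p l, ¬ I p l →
    (∃! l', I p l' ∧ ∀ p', ¬ (I p' l ∧ I p' l')) ∧
    (∃! p', I p' l ∧ ∀ l', ¬ (I p l' ∧ I p' l')))

/-!
In the incidence graph a point and a line are at distance `1` or `3` according as they are
incident or not, and two distinct lines are at distance `2` or `4` according as they meet or are
parallel. Hence two lines outside `L_S` whose directions are not covered by `L_S` can only be
resolved by their traces on `P_S`. Choosing `k` uncovered directions, the `k q` lines in these
directions have pairwise distinct traces of total size `k |P_S|`; at most one trace is empty and at
most `|P_S|` are singletons, so `2 k q ≤ (k + 1) |P_S| + 2`. Exchanging points and lines gives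
`2 k q ≤ (k + 1) |L_S| + 2` for `k` unblocked classes. Likewise, lines outside `L_S` missing `P_S`
have pairwise distinct directions, so `q² ≤ q |P_S| + |L_S| + q`. The three bounds follow from
these inequalities and `|P_S| ≤ |L_S|` by arithmetic.
-/

namespace SimpleGraph

variable {V W : Type*} {G : SimpleGraph V} {G' : SimpleGraph W}

lemma Iso.dist_eq (e : G ≃g G') (u v : V) : G'.dist (e u) (e v) = G.dist u v := by
  simp only [dist_eq_sInf]
  congr 1
  ext n
  constructor
  · rintro ⟨w, rfl⟩
    exact ⟨(w.map e.symm.toHom).copy (by simp) (by simp), by simp⟩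
  · rintro ⟨w, rfl⟩
    exact ⟨w.map e.toHom, w.length_map _⟩

end SimpleGraph

lemma IsResolvingSet.image_iso {V W : Type*} {G : SimpleGraph V} {G' : SimpleGraph W}
    {S : Set V} (hS : IsResolvingSet G S) (e : G ≃g G') : IsResolvingSet G' (e '' S) := by
  intro x y h
  obtain ⟨x, rfl⟩ := e.surjective x
  obtain ⟨y, rfl⟩ := e.surjective y
  exact congrArg e <| hS x y fun s hs => by simpa only [e.dist_eq] using h (e s) ⟨s, hs, rfl⟩

namespace IncGraph

open SimpleGraph

variable {Pt Ln : Type*} {I : Pt → Ln → Prop} {p p' : Pt} {l l' : Ln}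

@[simp] lemma adj_inl_inr : (IncGraph I).Adj (.inl p) (.inr l) ↔ I p l := by simp [IncGraph]

@[simp] lemma adj_inr_inl : (IncGraph I).Adj (.inr l) (.inl p) ↔ I p l := by simp [IncGraph]

@[simp] lemma not_adj_inl_inl : ¬ (IncGraph I).Adj (.inl p) (.inl p') := by simp [IncGraph]

@[simp] lemma not_adj_inr_inr : ¬ (IncGraph I).Adj (.inr l) (.inr l') := by simp [IncGraph]

lemma even_length_iff {x y : Pt ⊕ Ln} (w : (IncGraph I).Walk x y) :
    Even w.length ↔ x.isLeft = y.isLeft := by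
  induction w with
  | nil => simp
  | @cons x y z h w ih =>
    rw [Walk.length_cons, Nat.even_add_one, ih]
    rcases x with p | l <;> rcases y with p' | l' <;> rcases z with p'' | l'' <;> simp_all

lemma even_dist_iff {x y : Pt ⊕ Ln} (h : (IncGraph I).Reachable x y) :
    Even ((IncGraph I).dist x y) ↔ x.isLeft = y.isLeft := by
  obtain ⟨w, hw⟩ := h.exists_walk_length_eq_dist
  rw [← hw, even_length_iff]

lemma dist_inr_inr_ne_two (hdisj : ∀ p, ¬ (I p l ∧ I p l')) :
    (IncGraph I).dist (.inr l) (.inr l') ≠ 2 := by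
  intro h2
  have hr : (IncGraph I).Reachable (.inr l) (.inr l') := Reachable.of_dist_ne_zero (by omega)
  obtain ⟨-, -, x, hx⟩ := edist_eq_two_iff.1 (by rw [← hr.coe_dist_eq_edist, h2]; rfl)
  rw [mem_commonNeighbors] at hx
  rcases x with p | m
  · exact hdisj p ⟨adj_inr_inl.1 hx.1, adj_inr_inl.1 hx.2⟩
  · exact not_adj_inr_inr hx.1

def swapIso : IncGraph I ≃g IncGraph (flip I) where
  toEquiv := Equiv.sumComm Pt Ln
  map_rel_iff' := by rintro (p | l) (p' | l') <;> simp [flip]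

end IncGraph

lemma IsResolvingSet.incGraph_flip {Pt Ln : Type*} {I : Pt → Ln → Prop} {PS : Set Pt}
    {LS : Set Ln} (h : IsResolvingSet (IncGraph I) (.inl '' PS ∪ .inr '' LS)) :
    IsResolvingSet (IncGraph (flip I)) (.inl '' LS ∪ .inr '' PS) := by
  convert h.image_iso IncGraph.swapIso using 1
  simp [IncGraph.swapIso, image_union, image_image, union_comm]

namespace Finset

lemma card_filter_card_eq_le_choose {ι α : Type*} {s : Finset ι} {t : Finset α}
    {f : ι → Finset α} (hf : ∀ i ∈ s, f i ⊆ t) (hinj : Set.InjOn f s) (k : ℕ) :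
    #{i ∈ s | #(f i) = k} ≤ (#t).choose k := by
  rw [← card_powersetCard]
  refine card_le_card_of_injOn f (fun i hi => ?_) (hinj.mono (coe_subset.2 (filter_subset _ _)))
  obtain ⟨hi, hk⟩ := mem_filter.1 hi
  exact mem_powersetCard.2 ⟨hf i hi, hk⟩

/-- At most one of the sets is empty and at most `#t` of them are singletons. -/
lemma two_mul_card_le_sum_card_add {ι α : Type*} {s : Finset ι} {t : Finset α}
    {f : ι → Finset α} (hf : ∀ i ∈ s, f i ⊆ t) (hinj : Set.InjOn f s) :
    2 * #s ≤ ∑ i ∈ s, #(f i) + #t + 2 := by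
  have hpt : ∀ i ∈ s,
      2 ≤ #(f i) + ((if #(f i) = 0 then 2 else 0) + (if #(f i) = 1 then 1 else 0)) := by
    intro i _
    split_ifs <;> omega
  have hsum := sum_le_sum hpt
  simp only [sum_const, smul_eq_mul, sum_add_distrib, sum_ite] at hsum
  have h₀ := card_filter_card_eq_le_choose hf hinj 0
  have h₁ := card_filter_card_eq_le_choose hf hinj 1
  rw [Nat.choose_zero_right] at h₀
  rw [Nat.choose_one_right] at h₁
  omega

end Finset

namespace IsBiaffinePlane

open SimpleGraph IncGraph

variable {Pt Ln : Type*} {q : ℕ} {I : Pt → Ln → Prop} {dir : Ln → Fin q} {cls : Pt → Fin q}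
  {PS : Set Pt} {LS : Set Ln}

protected lemma flip [Finite Pt] [Finite Ln] (h : IsBiaffinePlane q I dir cls) :
    IsBiaffinePlane q (flip I) cls dir := by
  obtain ⟨hPt, hLn, hline, hpt, hmeet, hdir, hcls, hout⟩ := h
  refine ⟨hLn, hPt, hpt, hline, fun l₁ l₂ hne => ?_, hcls, hdir,
    fun l p hpl => (hout p l hpl).symm⟩
  refine (ncard_le_one_iff).2 fun {p₁ p₂} h₁ h₂ => by_contra fun hp => hne ?_
  exact (ncard_le_one_iff).1 (hmeet p₁ p₂ hp) ⟨h₁.1, h₂.1⟩ ⟨h₁.2, h₂.2⟩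

lemma exists_incident (h : IsBiaffinePlane q I dir cls) (hq : q ≠ 0) (l : Ln) : ∃ p, I p l := by
  obtain ⟨-, -, hline, -⟩ := h
  exact nonempty_of_ncard_ne_zero (s := {p | I p l}) (hline l ▸ hq)

lemma existsUnique_incident_dir_eq (h : IsBiaffinePlane q I dir cls) (p : Pt) (d : Fin q) :
    ∃! l, I p l ∧ dir l = d := by
  obtain ⟨-, -, -, hpt, -, hdir, -⟩ := h
  have hinj : InjOn dir {l | I p l} := fun l₁ h₁ l₂ h₂ hd =>
    ((hdir l₁ l₂).1 hd).resolve_right fun hdisj => hdisj p ⟨h₁, h₂⟩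
  have hsurj : dir '' {l | I p l} = univ := by
    refine eq_of_subset_of_ncard_le (subset_univ _) ?_
    rw [hinj.ncard_image, hpt p, ncard_univ, Nat.card_eq_fintype_card, Fintype.card_fin]
  obtain ⟨l, hl, rfl⟩ : d ∈ dir '' {l | I p l} := hsurj ▸ mem_univ d
  exact ⟨l, ⟨hl, rfl⟩, fun l' hl' => hinj hl'.1 hl hl'.2⟩

/-- Take a line through `p` other than the unique one missing `l`. -/
lemma exists_path_three (h : IsBiaffinePlane q I dir cls) (hq : 2 ≤ q) {p : Pt} {l : Ln}
    (hpl : ¬ I p l) : ∃ m p', I p m ∧ I p' m ∧ I p' l := by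
  obtain ⟨-, -, -, hpt, -, -, -, hout⟩ := h
  obtain ⟨m₀, -, hm₀⟩ := (hout p l hpl).1
  obtain ⟨m, hpm, hne⟩ :=
    exists_ne_of_one_lt_ncard (s := {m | I p m}) (by rw [hpt p]; omega) m₀
  by_contra! hmiss
  exact hne (hm₀ m ⟨hpm, fun p' hp' => hmiss m p' hpm hp'.2 hp'.1⟩)

open Classical in
lemma dist_inl_inr (h : IsBiaffinePlane q I dir cls) (hq : 2 ≤ q) (p : Pt) (l : Ln) :
    (IncGraph I).dist (.inl p) (.inr l) = if I p l then 1 else 3 := by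
  split_ifs with hpl
  · exact dist_eq_one_iff_adj.2 (adj_inl_inr.2 hpl)
  obtain ⟨m, p', hpm, hp'm, hp'l⟩ := h.exists_path_three hq hpl
  let w : (IncGraph I).Walk (.inl p) (.inr l) :=
    .cons (adj_inl_inr.2 hpm) (.cons (adj_inr_inl.2 hp'm) (.cons (adj_inl_inr.2 hp'l) .nil))
  have hle : (IncGraph I).dist (.inl p) (.inr l) ≤ 3 := dist_le w
  have hne1 : (IncGraph I).dist (.inl p) (.inr l) ≠ 1 := fun h1 =>
    hpl (adj_inl_inr.1 (dist_eq_one_iff_adj.1 h1))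
  obtain ⟨k, hk⟩ := Nat.not_even_iff_odd.1 <| (not_congr (even_dist_iff w.reachable)).2 (by simp)
  omega

open Classical in
lemma dist_inr_inr (h : IsBiaffinePlane q I dir cls) (hq : 2 ≤ q) (m l : Ln) :
    (IncGraph I).dist (.inr m) (.inr l) = if m = l then 0 else if dir m = dir l then 4 else 2 := by
  have hdir_iff := h.2.2.2.2.2.1 m l
  split_ifs with heq hdir
  · simp [heq]
  · have hdisj : ∀ p, ¬ (I p m ∧ I p l) := (hdir_iff.1 hdir).resolve_left heq
    obtain ⟨p, hpm⟩ := h.exists_incident (by omega) m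
    obtain ⟨m', p', hpm', hp'm', hp'l⟩ := h.exists_path_three hq fun hpl => hdisj p ⟨hpm, hpl⟩
    let w : (IncGraph I).Walk (.inr m) (.inr l) :=
      .cons (adj_inr_inl.2 hpm) (.cons (adj_inl_inr.2 hpm')
        (.cons (adj_inr_inl.2 hp'm') (.cons (adj_inl_inr.2 hp'l) .nil)))
    have hle : (IncGraph I).dist (.inr m) (.inr l) ≤ 4 := dist_le w
    have hne0 : (IncGraph I).dist (.inr m) (.inr l) ≠ 0 :=
      dist_ne_zero_iff_ne_and_reachable.2 ⟨by simpa, w.reachable⟩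
    have hne2 := dist_inr_inr_ne_two hdisj
    obtain ⟨k, hk⟩ := (even_dist_iff w.reachable).2 rfl
    omega
  · obtain ⟨-, p, hpm, hpl⟩ : m ≠ l ∧ ∃ p, I p m ∧ I p l := by
      simpa [not_or] using mt hdir_iff.2 hdir
    let w : (IncGraph I).Walk (.inr m) (.inr l) :=
      .cons (adj_inr_inl.2 hpm) (.cons (adj_inl_inr.2 hpl) .nil)
    have hle : (IncGraph I).dist (.inr m) (.inr l) ≤ 2 := dist_le w
    have hne0 : (IncGraph I).dist (.inr m) (.inr l) ≠ 0 :=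
      dist_ne_zero_iff_ne_and_reachable.2 ⟨by simpa, w.reachable⟩
    have hne1 : (IncGraph I).dist (.inr m) (.inr l) ≠ 1 := fun h1 =>
      not_adj_inr_inr (dist_eq_one_iff_adj.1 h1)
    omega

lemma line_eq_of_isResolvingSet (h : IsBiaffinePlane q I dir cls) (hq : 2 ≤ q)
    (hres : IsResolvingSet (IncGraph I) (.inl '' PS ∪ .inr '' LS)) {m₁ m₂ : Ln}
    (h₁ : m₁ ∉ LS) (h₂ : m₂ ∉ LS) (hdir : ∀ l ∈ LS, dir m₁ = dir l ↔ dir m₂ = dir l)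
    (hinc : ∀ p ∈ PS, I p m₁ ↔ I p m₂) : m₁ = m₂ := by
  refine Sum.inr_injective (hres _ _ ?_)
  rintro _ (⟨p, hp, rfl⟩ | ⟨l, hl, rfl⟩)
  · rw [dist_comm, dist_comm (u := Sum.inr m₂), h.dist_inl_inr hq, h.dist_inl_inr hq, propext (hinc p hp)]
  · have hne₁ : m₁ ≠ l := fun e => h₁ (e ▸ hl)
    have hne₂ : m₂ ≠ l := fun e => h₂ (e ▸ hl)
    simp only [h.dist_inr_inr hq, hne₁, hne₂, hdir l hl]

section Counting

open Finset
open scoped Classical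

lemma card_filter_incident [Fintype Pt] (h : IsBiaffinePlane q I dir cls) (l : Ln) :
    #{p | I p l} = q := by
  obtain ⟨-, -, hline, -⟩ := h
  rw [← hline l, Set.ncard_eq_toFinset_card', Set.toFinset_ofPred]

lemma card_filter_dir_mem_incident [Fintype Ln] (h : IsBiaffinePlane q I dir cls) (p : Pt)
    (D : Finset (Fin q)) : #{l | dir l ∈ D ∧ I p l} = #D := by
  refine card_bij (fun l _ => dir l) (fun l hl => (mem_filter.1 hl).2.1)
    (fun l₁ h₁ l₂ h₂ hd => ?_) (fun d hd => ?_)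
  · obtain ⟨l₀, -, huniq⟩ := h.existsUnique_incident_dir_eq p (dir l₁)
    exact (huniq l₁ ⟨(mem_filter.1 h₁).2.2, rfl⟩).trans
      (huniq l₂ ⟨(mem_filter.1 h₂).2.2, hd.symm⟩).symm
  · obtain ⟨l, ⟨hpl, rfl⟩, -⟩ := h.existsUnique_incident_dir_eq p d
    exact ⟨l, mem_filter.2 ⟨mem_univ _, hd, hpl⟩, rfl⟩

lemma card_filter_dir_mem [Fintype Pt] [Fintype Ln] (h : IsBiaffinePlane q I dir cls)
    (hq : q ≠ 0) (D : Finset (Fin q)) : #{l | dir l ∈ D} = #D * q := by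
  have hcount := card_mul_eq_card_mul (fun p l => I p l) (s := univ) (t := {l | dir l ∈ D})
    (fun p _ => by
      simpa only [bipartiteAbove, filter_filter] using h.card_filter_dir_mem_incident p D)
    (fun l _ => h.card_filter_incident l)
  rw [card_univ, ← Nat.card_eq_fintype_card, h.1] at hcount
  exact Nat.eq_of_mul_eq_mul_right (Nat.pos_of_ne_zero hq) (by rw [← hcount]; ring)

lemma sum_card_filter_incident [Fintype Ln] (h : IsBiaffinePlane q I dir cls) (P : Finset Pt)
    (D : Finset (Fin q)) : ∑ l ∈ {l | dir l ∈ D}, #{p ∈ P | I p l} = #P * #D :=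
  calc _ = ∑ p ∈ P, #{l ∈ ({l | dir l ∈ D} : Finset Ln) | I p l} :=
        (sum_card_bipartiteAbove_eq_sum_card_bipartiteBelow (fun p l => I p l)).symm
    _ = #P * #D := sum_const_nat fun p _ => by
      simpa only [bipartiteAbove, filter_filter] using h.card_filter_dir_mem_incident p D

lemma card_filter_untouched_le [Fintype Ln] (h : IsBiaffinePlane q I dir cls) (hq : 2 ≤ q)
    (hres : IsResolvingSet (IncGraph I) (.inl '' PS ∪ .inr '' LS)) :
    #{l | l ∉ LS ∧ ∀ p ∈ PS, ¬ I p l} ≤ q := by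
  refine (card_le_card_of_injOn dir (t := univ) (fun _ _ => mem_univ _) ?_).trans
    (card_univ.trans (Fintype.card_fin q)).le
  intro m₁ hm₁ m₂ hm₂ hd
  obtain ⟨-, hm₁⟩ := mem_filter.1 (mem_coe.1 hm₁)
  obtain ⟨-, hm₂⟩ := mem_filter.1 (mem_coe.1 hm₂)
  exact h.line_eq_of_isResolvingSet hq hres hm₁.1 hm₂.1 (fun l _ => by rw [hd])
    (fun p hp => iff_of_false (hm₁.2 p hp) (hm₂.2 p hp))

end Counting

open Finset in
theorem two_mul_mul_le [Fintype Pt] [Fintype Ln] (h : IsBiaffinePlane q I dir cls) (hq : 2 ≤ q)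
    (hres : IsResolvingSet (IncGraph I) (.inl '' PS ∪ .inr '' LS)) {k : ℕ}
    (hk : k ≤ {d : Fin q | ∀ l ∈ LS, dir l ≠ d}.ncard) :
    2 * (k * q) ≤ (k + 1) * PS.ncard + 2 := by
  classical
  rw [Set.ncard_eq_toFinset_card', Set.toFinset_ofPred] at hk
  obtain ⟨D, hD, rfl⟩ := exists_subset_card_eq hk
  have huncov : ∀ m ∈ ({l | dir l ∈ D} : Finset Ln), ∀ l ∈ LS, dir l ≠ dir m := fun m hm =>
    (mem_filter.1 (hD (mem_filter.1 hm).2)).2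
  set P := PS.toFinite.toFinset
  have hinj : Set.InjOn (fun l => {p ∈ P | I p l}) ({l | dir l ∈ D} : Finset Ln) := by
    intro m₁ hm₁ m₂ hm₂ heq
    refine h.line_eq_of_isResolvingSet hq hres (fun hm => huncov m₁ hm₁ m₁ hm rfl)
      (fun hm => huncov m₂ hm₂ m₂ hm rfl)
      (fun l hl => iff_of_false (huncov m₁ hm₁ l hl ·.symm) (huncov m₂ hm₂ l hl ·.symm))
      (fun p hp => ?_)
    simpa [P, hp] using congrArg (p ∈ ·) heq
  have hbound := two_mul_card_le_sum_card_add (fun l _ => filter_subset _ P) hinj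
  rw [h.card_filter_dir_mem (by omega), h.sum_card_filter_incident] at hbound
  rw [Set.ncard_eq_toFinset_card PS]
  linarith

open Finset in
theorem sq_le_mul_ncard_add [Fintype Pt] [Fintype Ln] (h : IsBiaffinePlane q I dir cls)
    (hq : 2 ≤ q) (hres : IsResolvingSet (IncGraph I) (.inl '' PS ∪ .inr '' LS)) :
    q ^ 2 ≤ q * PS.ncard + LS.ncard + q := by
  classical
  rw [Set.ncard_eq_toFinset_card PS, Set.ncard_eq_toFinset_card LS]
  set P := PS.toFinite.toFinset
  set L := LS.toFinite.toFinset
  set U : Finset Ln := {l | l ∉ LS ∧ ∀ p ∈ PS, ¬ I p l}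
  have hU : #U ≤ q := by convert h.card_filter_untouched_le hq hres
  have hcover : (univ : Finset Ln) ⊆ P.biUnion (fun p => {l | I p l}) ∪ L ∪ U := by
    intro l _
    by_cases hl : l ∈ LS
    · simp [L, hl]
    by_cases htouch : ∃ p ∈ PS, I p l
    · simpa [P] using Or.inl htouch
    · push Not at htouch
      exact mem_union_right _ (mem_filter.2 ⟨mem_univ _, hl, htouch⟩)
  have htouched : #(P.biUnion fun p => {l | I p l}) ≤ q * #P :=
    card_biUnion_le.trans_eq <|
      (sum_const_nat fun p _ => h.flip.card_filter_incident p).trans (mul_comm _ _)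
  calc q ^ 2 = #(univ : Finset Ln) := by rw [card_univ, ← Nat.card_eq_fintype_card, h.2.1]
    _ ≤ #(P.biUnion fun p => {l | I p l}) + #L + #U :=
      (Finset.card_le_card hcover).trans <| (Finset.card_union_le _ _).trans <|
        Nat.add_le_add_right (Finset.card_union_le _ _) _
    _ ≤ q * #P + #L + q := by omega

end IsBiaffinePlane

/-- Let `S = P_S ∪ L_S` be a resolving set for a biaffine plane of order `q` with
`|P_S| ≤ |L_S|`, let `u` be the number of uncovered directions and `c` the number of
unblocked classes. If `|S| < 3(q-1)` then `u ≤ 2`; if `|S| < (8/3)(q-1)` then `u ≤ 1`;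
if `|S| < (8/3)(q-1) - 1` then `c ≤ 4`. -/
theorem biaffine_u_c_small {Pt Ln : Type*} [Fintype Pt] [Fintype Ln]
    (q : ℕ) (hq : 2 ≤ q) (I : Pt → Ln → Prop) (dir : Ln → Fin q) (cls : Pt → Fin q)
    (hBA : IsBiaffinePlane q I dir cls)
    (PS : Set Pt) (LS : Set Ln) (hPL : PS.ncard ≤ LS.ncard)
    (hres : IsResolvingSet (IncGraph I) (Sum.inl '' PS ∪ Sum.inr '' LS))
    (u c : ℕ)
    (hu : u = {d : Fin q | ∀ l ∈ LS, dir l ≠ d}.ncard)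
    (hc : c = {d : Fin q | ∀ p ∈ PS, cls p ≠ d}.ncard) :
    (((PS.ncard : ℝ) + LS.ncard < 3 * (q - 1)) → u ≤ 2) ∧
    (((PS.ncard : ℝ) + LS.ncard < 8 / 3 * (q - 1)) → u ≤ 1) ∧
    (((PS.ncard : ℝ) + LS.ncard < 8 / 3 * (q - 1) - 1) → c ≤ 4) := by
  subst hu hc
  have hPL' : (PS.ncard : ℝ) ≤ LS.ncard := by exact_mod_cast hPL
  refine ⟨fun hS => ?_, fun hS => ?_, fun hS => ?_⟩
  · by_contra! hu
    have hP : (2 * (3 * q) : ℝ) ≤ (3 + 1) * PS.ncard + 2 := by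
      exact_mod_cast hBA.two_mul_mul_le hq hres hu
    linarith
  · by_contra! hu
    have hP : (2 * (2 * q) : ℝ) ≤ (2 + 1) * PS.ncard + 2 := by
      exact_mod_cast hBA.two_mul_mul_le hq hres hu
    linarith
  · by_contra! hc
    have hL : (2 * (5 * q) : ℝ) ≤ (5 + 1) * LS.ncard + 2 := by
      exact_mod_cast hBA.flip.two_mul_mul_le hq hres.incGraph_flip hc
    have hcount : (q : ℝ) ^ 2 ≤ q * PS.ncard + LS.ncard + q := by
      exact_mod_cast hBA.sq_le_mul_ncard_add hq hres
    have hq' : (2 : ℝ) ≤ q := by exact_mod_cast hq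
    nlinarith [mul_lt_mul_of_pos_left hS (by positivity : (0 : ℝ) < q),
      mul_le_mul_of_nonneg_left hL (by linarith : (0 : ℝ) ≤ q - 1)]
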